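/- arXiv:1604.02467 — 2 statements merged into one kernel-verified Lean document; each statement's English description precedes it below -/
import Mathlib

section
/- Let m be a positive integer, c : Fin m → ℝ a censoring vector, and define weights w_i = c_i - ∑_{j=1}^{i} c_j/(m-j+1) for i = 1,...,m. Then for any vector x : Fin m → ℝ, the log-rank statistic ∑_{j=1}^m c_j (x_j - (m₁ - ∑_{i=1}^{j-1} x_i)/(m-j+1)), where m₁ = ∑_{i=1}^m x_i, equals the weighted sum ∑_{j=1}^m w_j x_j. -/
/-!
Writing `∑_{i ≥ j} x_i` for the number at risk `m₁ - ∑_{i < j} x_i` turns the log-rank statistic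
into `∑_j c_j x_j - ∑_{j ≤ i} c_j/(m-j+1) · x_i`; exchanging the order of the triangular double
sum collects the coefficient of each `x_i`, which is the weight `w_i`.
-/

open Finset

theorem Finset.sum_Icc_Icc_comm {M : Type*} [AddCommMonoid M] (a b : ℕ) (f : ℕ → ℕ → M) :
    ∑ i ∈ Icc a b, ∑ j ∈ Icc i b, f i j = ∑ j ∈ Icc a b, ∑ i ∈ Icc a j, f i j :=
  sum_comm' fun i j => by simp only [mem_Icc]; omega

theorem Finset.sum_Icc_pred_add_sum_Icc {M : Type*} [AddCommMonoid M] (f : ℕ → M) {a b j : ℕ}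
    (ha : a ≤ j) (hj : 0 < j) (hb : j ≤ b + 1) :
    ∑ i ∈ Icc a (j - 1), f i + ∑ i ∈ Icc j b, f i = ∑ i ∈ Icc a b, f i := by
  rw [← sum_union]
  · congr 1
    ext i
    simp only [mem_union, mem_Icc]
    omega
  · exact disjoint_left.2 fun i hi hi' => by simp only [mem_Icc] at hi hi'; omega

theorem Finset.sum_mul_sum_Icc_eq_sum_sum_Icc_mul {R : Type*} [NonUnitalNonAssocSemiring R]
    (a x : ℕ → R) (n m : ℕ) :
    ∑ j ∈ Icc n m, a j * ∑ i ∈ Icc j m, x i = ∑ i ∈ Icc n m, (∑ j ∈ Icc n i, a j) * x i := by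
  simp_rw [mul_sum, sum_mul]
  exact sum_Icc_Icc_comm n m fun j i => a j * x i

theorem logrank_weighted_sum_general (m : ℕ) (c x : ℕ → ℝ) :
    ∑ j ∈ Finset.Icc 1 m,
      c j * (x j - ((∑ i ∈ Finset.Icc 1 m, x i) - ∑ i ∈ Finset.Icc 1 (j - 1), x i) /
        ((m : ℝ) - j + 1))
    = ∑ j ∈ Finset.Icc 1 m,
        (c j - ∑ i ∈ Finset.Icc 1 j, c i / ((m : ℝ) - i + 1)) * x j := by
  have at_risk : ∀ j ∈ Icc 1 m,
      (∑ i ∈ Icc 1 m, x i) - ∑ i ∈ Icc 1 (j - 1), x i = ∑ i ∈ Icc j m, x i := by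
    intro j hj
    rw [mem_Icc] at hj
    rw [← sum_Icc_pred_add_sum_Icc x hj.1 hj.1 (by omega), add_sub_cancel_left]
  calc _ = ∑ j ∈ Icc 1 m,
        (c j * x j - c j / ((m : ℝ) - j + 1) * ∑ i ∈ Icc j m, x i) :=
        sum_congr rfl fun j hj => by rw [at_risk j hj]; ring
    _ = ∑ j ∈ Icc 1 m, c j * x j
          - ∑ j ∈ Icc 1 m, (∑ i ∈ Icc 1 j, c i / ((m : ℝ) - i + 1)) * x j := by
        rw [sum_sub_distrib, sum_mul_sum_Icc_eq_sum_sum_Icc_mul]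
    _ = _ := by simp_rw [sub_mul, sum_sub_distrib]

/-- The log-rank statistic equals a weighted sum with weights
`w j = c j - ∑_{i=1}^{j} c i / (m - i + 1)` independent of `x`. -/
theorem logrank_weighted_sum (m : ℕ) (hm : 0 < m) (c x : ℕ → ℝ) :
    ∑ j ∈ Finset.Icc 1 m,
      c j * (x j - ((∑ i ∈ Finset.Icc 1 m, x i) - ∑ i ∈ Finset.Icc 1 (j - 1), x i) /
        ((m : ℝ) - j + 1))
    = ∑ j ∈ Finset.Icc 1 m,
        (c j - ∑ i ∈ Finset.Icc 1 j, c i / ((m : ℝ) - i + 1)) * x j :=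
  logrank_weighted_sum_general m c x
end

section
/- Let m be a positive integer divisible by 4 and sufficiently large, with c_j = 1 for j ≤ m/4 and c_j = 0 for j > m/4. Define w_i = c_i - ∑_{j=1}^{i} c_j/(m-j+1). Then w_{m/4} = 1 - H(m) + H(3m/4) > 0, where H(n) is the n-th harmonic number. Consequently w_i > 0 for all 1 ≤ i ≤ m/4. -/
/-!
Reflecting `j ↦ m + 1 - j`, the weight `w_i` for `i ≤ m/4` is `1` minus the sum of `1/x` over
`m - i < x ≤ m`. These are `i` terms, each below `1/(m - i + 1)`, and `i < m - i + 1`, so the sum is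
below `1`; no asymptotics of the harmonic numbers are needed.
-/

open Finset

noncomputable def logRankWeight (m : ℕ) (c : ℕ → ℝ) (i : ℕ) : ℝ :=
  c i - ∑ j ∈ Icc 1 i, c j / ((m : ℝ) - j + 1)

lemma sum_Ioc_one_div_lt_one {a b : ℕ} (hab : b ≤ 2 * a) :
    ∑ x ∈ Ioc a b, (1 : ℝ) / x < 1 := by
  have hpos : (0 : ℝ) < a + 1 := by positivity
  have hterm : ∀ x ∈ Ioc a b, (1 : ℝ) / x ≤ 1 / (a + 1) := by
    intro x hx
    rw [mem_Ioc] at hx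
    gcongr
    exact_mod_cast hx.1
  calc ∑ x ∈ Ioc a b, (1 : ℝ) / x
      ≤ #(Ioc a b) • (1 / ((a : ℝ) + 1)) := sum_le_card_nsmul _ _ _ hterm
    _ = ((b - a : ℕ) : ℝ) / (a + 1) := by rw [Nat.card_Ioc, nsmul_eq_mul, mul_one_div]
    _ < 1 := by
      rw [div_lt_one hpos]
      exact_mod_cast (by omega : b - a < a + 1)

lemma sum_Icc_one_div_sub_eq_sum_Ioc {m i : ℕ} (hi : i ≤ m) :
    ∑ j ∈ Icc 1 i, (1 : ℝ) / ((m : ℝ) - j + 1) = ∑ x ∈ Ioc (m - i) m, (1 : ℝ) / x := by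
  refine sum_nbij' (fun j => m + 1 - j) (fun x => m + 1 - x) ?_ ?_ ?_ ?_ ?_ <;>
    intro j hj <;> simp only [mem_Icc, mem_Ioc] at hj ⊢
  · omega
  · omega
  · omega
  · omega
  · rw [Nat.cast_sub (by omega), Nat.cast_add_one]
    ring_nf

lemma sum_Icc_one_sub_sum_Icc_one {M : Type*} [AddCommGroup M] (f : ℕ → M) {a b : ℕ}
    (hab : a ≤ b) : ∑ k ∈ Icc 1 b, f k - ∑ k ∈ Icc 1 a, f k = ∑ k ∈ Ioc a b, f k := by
  have hIcc (n : ℕ) : Icc 1 n = Ioc 0 n := Icc_add_one_left_eq_Ioc 0 n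
  rw [hIcc, hIcc, ← sum_Ioc_consecutive f (Nat.zero_le a) hab, add_sub_cancel_left]

section Indicator

variable {m q i : ℕ}

lemma logRankWeight_indicator_of_le (hiq : i ≤ q) (him : i ≤ m) :
    logRankWeight m (fun j => if j ≤ q then 1 else 0) i
      = 1 - ∑ x ∈ Ioc (m - i) m, (1 : ℝ) / x := by
  rw [logRankWeight, if_pos hiq, ← sum_Icc_one_div_sub_eq_sum_Ioc him]
  congr 1
  refine sum_congr rfl fun j hj => ?_
  rw [if_pos (by rw [mem_Icc] at hj; omega)]

lemma logRankWeight_indicator_pos (hiq : i ≤ q) (him : 2 * i ≤ m) :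
    0 < logRankWeight m (fun j => if j ≤ q then 1 else 0) i := by
  rw [logRankWeight_indicator_of_le hiq (by omega), sub_pos]
  exact sum_Ioc_one_div_lt_one (by omega)

end Indicator

/-- For `m` divisible by 4 and sufficiently large, with `c j = 1` iff `j ≤ m/4`,
the weight `w (m/4)` equals `1 - H(m) + H(3m/4)` and is positive; consequently
`w i > 0` for all `1 ≤ i ≤ m/4`. -/
theorem weight_quarter_positive :
    ∃ M : ℕ, ∀ m : ℕ, M ≤ m → 4 ∣ m →
      ∀ c w H : ℕ → ℝ,
        (∀ j, c j = if j ≤ m / 4 then 1 else 0) →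
        (∀ i, w i = c i - ∑ j ∈ Finset.Icc 1 i, c j / ((m : ℝ) - j + 1)) →
        (∀ n, H n = ∑ k ∈ Finset.Icc 1 n, (1 : ℝ) / k) →
        w (m / 4) = 1 - H m + H (3 * m / 4) ∧
        0 < w (m / 4) ∧
        (∀ i, 1 ≤ i → i ≤ m / 4 → 0 < w i) := by
  refine ⟨0, fun m _ h4 c w H hc hw hH => ?_⟩
  obtain rfl : w = logRankWeight m c := funext hw
  obtain rfl : c = fun j => if j ≤ m / 4 then 1 else 0 := funext hc
  have hHdiff : H m - H (3 * m / 4) = ∑ x ∈ Ioc (m - m / 4) m, (1 : ℝ) / x := by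
    rw [hH, hH, sum_Icc_one_sub_sum_Icc_one _ (by omega), (by omega : 3 * m / 4 = m - m / 4)]
  refine ⟨?_, logRankWeight_indicator_pos le_rfl (by omega),
    fun i _ hi => logRankWeight_indicator_pos hi (by omega)⟩
  rw [logRankWeight_indicator_of_le le_rfl (by omega), ← hHdiff]
  ring
end
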